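/- arXiv:2509.19689 — 2 statements merged into one kernel-verified Lean document; each statement's English description precedes it below -/
import Mathlib

section
/- For all vectors u, v, w, ξ in V: Tr(c̃(u)∘c̃(v)∘c̃(w)∘ι(ξ)) = −(a₀²b₀/2)·[ξ(u)g(v,w) − ξ(v)g(u,w) + ξ(w)g(u,v)]·Tr(Id), and Tr(c̃(u)∘c̃(v)∘c̃(w)∘ε(ξ)) = (a₀b₀²/2)·[ξ(u)g(v,w) − ξ(v)g(u,w) + ξ(w)g(u,v)]·Tr(Id). -/
open scoped RealInnerProductSpace

noncomputable def eps {V : Type*} [NormedAddCommGroup V] [InnerProductSpace ℝ V]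
    (v : V) : Module.End ℝ (ExteriorAlgebra ℝ V) :=
  LinearMap.mulLeft ℝ (ExteriorAlgebra.ι ℝ v)

noncomputable def iot {V : Type*} [NormedAddCommGroup V] [InnerProductSpace ℝ V]
    (v : V) : Module.End ℝ (ExteriorAlgebra ℝ V) :=
  CliffordAlgebra.contractLeft (innerₛₗ ℝ v)

noncomputable def ctil {V : Type*} [NormedAddCommGroup V] [InnerProductSpace ℝ V]
    (a₀ b₀ : ℝ) (v : V) : Module.End ℝ (ExteriorAlgebra ℝ V) :=
  a₀ • eps v - b₀ • iot v

noncomputable def cbar {V : Type*} [NormedAddCommGroup V] [InnerProductSpace ℝ V]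
    (a₀ b₀ : ℝ) (v : V) : Module.End ℝ (ExteriorAlgebra ℝ V) :=
  b₀ • eps v - a₀ • iot v

noncomputable def cmap {V : Type*} [NormedAddCommGroup V] [InnerProductSpace ℝ V]
    (v : V) : Module.End ℝ (ExteriorAlgebra ℝ V) :=
  eps v - iot v

noncomputable def chat {V : Type*} [NormedAddCommGroup V] [InnerProductSpace ℝ V]
    (v : V) : Module.End ℝ (ExteriorAlgebra ℝ V) :=
  eps v + iot v

section aux
variable {V : Type*} [NormedAddCommGroup V] [InnerProductSpace ℝ V]

local notation "T" => LinearMap.trace ℝ (ExteriorAlgebra ℝ V)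

lemma ie_rel (a b : V) : iot a * eps b = (⟪a,b⟫ : ℝ) • (1 : Module.End ℝ (ExteriorAlgebra ℝ V)) - eps b * iot a := by
  refine LinearMap.ext fun x => ?_
  simp only [iot, eps, Module.End.mul_apply, LinearMap.mulLeft_apply, LinearMap.sub_apply,
    LinearMap.smul_apply, Module.End.one_apply]
  exact CliffordAlgebra.contractLeft_ι_mul (innerₛₗ ℝ a) b x

lemma ee_rel (a b : V) : eps a * eps b = -(eps b * eps a) := by
  refine LinearMap.ext fun x => ?_
  have h : ExteriorAlgebra.ι ℝ a * ExteriorAlgebra.ι ℝ b = -(ExteriorAlgebra.ι ℝ b * ExteriorAlgebra.ι ℝ a) := by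
    have h2 := ExteriorAlgebra.ι_sq_zero (R := ℝ) (a + b)
    simp only [map_add, add_mul, mul_add, ExteriorAlgebra.ι_sq_zero, zero_add, add_zero] at h2
    rw [add_comm] at h2; exact eq_neg_of_add_eq_zero_left h2
  simp only [eps, Module.End.mul_apply, LinearMap.mulLeft_apply, LinearMap.neg_apply,
    ← mul_assoc, h, neg_mul]

lemma ii_rel (a b : V) : iot a * iot b = -(iot b * iot a) := by
  refine LinearMap.ext fun x => ?_
  simp only [iot, Module.End.mul_apply, LinearMap.neg_apply]
  exact CliffordAlgebra.contractLeft_comm _ _ x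

lemma End_neg_mul (x y : Module.End ℝ (ExteriorAlgebra ℝ V)) : -x * y = -(x * y) :=
  LinearMap.ext fun z => by simp only [Module.End.mul_apply, LinearMap.neg_apply]

lemma End_mul_neg (x y : Module.End ℝ (ExteriorAlgebra ℝ V)) : x * -y = -(x * y) :=
  LinearMap.ext fun z => by simp only [Module.End.mul_apply, LinearMap.neg_apply, map_neg]

lemma ie_swap (a b : V) (x : Module.End ℝ (ExteriorAlgebra ℝ V)) :
    iot a * (eps b * x) = (⟪a,b⟫ : ℝ) • x - eps b * (iot a * x) := by
  rw [← mul_assoc, ie_rel, sub_mul, smul_mul_assoc, one_mul, mul_assoc]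

lemma ee_swap (a b : V) (x : Module.End ℝ (ExteriorAlgebra ℝ V)) :
    eps a * (eps b * x) = -(eps b * (eps a * x)) := by
  rw [← mul_assoc, ee_rel, End_neg_mul, mul_assoc]

lemma ii_swap (a b : V) (x : Module.End ℝ (ExteriorAlgebra ℝ V)) :
    iot a * (iot b * x) = -(iot b * (iot a * x)) := by
  rw [← mul_assoc, ii_rel, End_neg_mul, mul_assoc]

lemma trEE (a b : V) : T (eps a * eps b) = 0 := by
  have h1 := LinearMap.trace_mul_comm ℝ (eps a) (eps b)
  have h2 := congrArg T (ee_rel b a)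
  rw [map_neg] at h2
  linarith [h1, h2]

lemma trII (a b : V) : T (iot a * iot b) = 0 := by
  have h1 := LinearMap.trace_mul_comm ℝ (iot a) (iot b)
  have h2 := congrArg T (ii_rel b a)
  rw [map_neg] at h2
  linarith [h1, h2]

lemma trEI (a b : V) : T (eps a * iot b) = ⟪a,b⟫ / 2 * T 1 := by
  have h1 := LinearMap.trace_mul_comm ℝ (iot b) (eps a)
  have h2 := congrArg T (ie_rel b a)
  rw [map_sub, map_smul, smul_eq_mul] at h2
  rw [real_inner_comm]
  linarith [h1, h2]

lemma trEEEI (a b c d : V) : T (eps a * (eps b * (eps c * iot d))) = 0 := by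
  have h1 := LinearMap.trace_mul_comm ℝ (eps a) (eps b * (eps c * iot d))
  have hop : (eps b * (eps c * iot d)) * eps a =
      (⟪d,a⟫ : ℝ) • (eps b * eps c) - eps a * (eps b * (eps c * iot d)) := by
    rw [mul_assoc, mul_assoc, ie_rel d a, mul_sub, mul_sub, mul_smul_comm, mul_smul_comm,
      mul_one, ee_swap c a, End_mul_neg, ee_swap b a, neg_neg]
  rw [hop, map_sub, map_smul, smul_eq_mul, trEE] at h1
  linarith [h1]

lemma trEEEE (a b c d : V) : T (eps a * (eps b * (eps c * eps d))) = 0 := by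
  have h1 := LinearMap.trace_mul_comm ℝ (eps a) (eps b * (eps c * eps d))
  have hop : (eps b * (eps c * eps d)) * eps a = -(eps a * (eps b * (eps c * eps d))) := by
    rw [mul_assoc, mul_assoc, ee_rel d a, End_mul_neg, End_mul_neg, ee_swap c a, End_mul_neg, neg_neg,
      ee_swap b a]
  rw [hop, map_neg] at h1
  linarith [h1]

lemma trIIII (a b c d : V) : T (iot a * (iot b * (iot c * iot d))) = 0 := by
  have h1 := LinearMap.trace_mul_comm ℝ (iot a) (iot b * (iot c * iot d))
  have hop : (iot b * (iot c * iot d)) * iot a = -(iot a * (iot b * (iot c * iot d))) := by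
    rw [mul_assoc, mul_assoc, ii_rel d a, End_mul_neg, End_mul_neg, ii_swap c a, End_mul_neg, neg_neg,
      ii_swap b a]
  rw [hop, map_neg] at h1
  linarith [h1]

lemma trEIII (a b c d : V) : T (eps a * (iot b * (iot c * iot d))) = 0 := by
  have h1 := LinearMap.trace_mul_comm ℝ (eps a) (iot b * (iot c * iot d))
  have hop : (iot b * (iot c * iot d)) * eps a =
      (⟪d,a⟫ : ℝ) • (iot b * iot c) - (⟪c,a⟫ : ℝ) • (iot b * iot d)
        + ((⟪b,a⟫ : ℝ) • (iot c * iot d) - eps a * (iot b * (iot c * iot d))) := by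
    rw [mul_assoc, mul_assoc, ie_rel d a, mul_sub, mul_sub, mul_smul_comm, mul_smul_comm,
      mul_one, ie_swap c a, mul_sub, mul_smul_comm, ie_swap b a]
    abel
  rw [hop, map_add, map_sub, map_sub, map_smul, map_smul, map_smul, smul_eq_mul, smul_eq_mul,
    smul_eq_mul, trII, trII, trII] at h1
  linarith [h1]

lemma trEEII (a b c d : V) : T (eps a * (eps b * (iot c * iot d))) =
    (⟪d,a⟫ * ⟪c,b⟫ - ⟪c,a⟫ * ⟪d,b⟫) / 4 * T 1 := by
  have h1 := LinearMap.trace_mul_comm ℝ (eps a) (eps b * (iot c * iot d))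
  have hop : (eps b * (iot c * iot d)) * eps a =
      (⟪d,a⟫ : ℝ) • (eps b * iot c) - (⟪c,a⟫ : ℝ) • (eps b * iot d)
        + -(eps a * (eps b * (iot c * iot d))) := by
    rw [mul_assoc, mul_assoc, ie_rel d a, mul_sub, mul_sub, mul_smul_comm, mul_smul_comm,
      mul_one, ie_swap c a, mul_sub, mul_smul_comm, ee_swap b a]
    abel
  rw [hop, map_add, map_sub, map_neg, map_smul, map_smul, smul_eq_mul, smul_eq_mul,
    trEI, trEI] at h1
  rw [real_inner_comm c b, real_inner_comm d b] at h1
  linarith [h1]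

end aux

theorem statement_6 {V : Type*} [NormedAddCommGroup V] [InnerProductSpace ℝ V]
    [FiniteDimensional ℝ V] (a₀ b₀ : ℝ) (u v w ξ : V) :
    LinearMap.trace ℝ (ExteriorAlgebra ℝ V) (ctil a₀ b₀ u * ctil a₀ b₀ v * ctil a₀ b₀ w * iot ξ) =
      -(a₀ ^ 2 * b₀ / 2) * (⟪ξ, u⟫ * ⟪v, w⟫ - ⟪ξ, v⟫ * ⟪u, w⟫ + ⟪ξ, w⟫ * ⟪u, v⟫) * LinearMap.trace ℝ (ExteriorAlgebra ℝ V) 1 ∧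
    LinearMap.trace ℝ (ExteriorAlgebra ℝ V) (ctil a₀ b₀ u * ctil a₀ b₀ v * ctil a₀ b₀ w * eps ξ) =
      a₀ * b₀ ^ 2 / 2 * (⟪ξ, u⟫ * ⟪v, w⟫ - ⟪ξ, v⟫ * ⟪u, w⟫ + ⟪ξ, w⟫ * ⟪u, v⟫) * LinearMap.trace ℝ (ExteriorAlgebra ℝ V) 1 := by
  constructor <;>
  · simp only [ctil, sub_mul, smul_mul_assoc, smul_sub, smul_smul, mul_assoc]
    simp only [ie_swap, ie_rel, mul_sub, mul_smul_comm, smul_sub, smul_smul, mul_one]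
    simp only [map_sub, map_smul, map_neg, smul_eq_mul, trEEEI, trEEEE, trEIII, trIIII, trEEII,
      trEE, trII, trEI, mul_zero, zero_sub, sub_zero, neg_zero, neg_neg]
    simp only [real_inner_comm ξ u, real_inner_comm ξ v, real_inner_comm ξ w,
      real_inner_comm u v, real_inner_comm u w, real_inner_comm v w]
    ring
end

section
/- For all vectors u, v, w, ξ, X in V, the trace of the composite endomorphism c̃(u)∘c̃(v)∘c̃(w)∘c̃(ξ)∘(c̄(ξ)∘c(X) + c(X)∘c̃(ξ))∘ε(ξ)∘ι(ξ) of ΛV equals ((a₀⁴b₀ − 5a₀²b₀³)/4)·|ξ|²·ξ(X)·A·Tr(Id) − (a₀²b₀(a₀+b₀)(a₀−b₀)/4)·|ξ|⁴·B·Tr(Id), where A = ξ(u)g(v,w) − ξ(v)g(u,w) + ξ(w)g(u,v) and B = g(X,u)g(v,w) − g(X,v)g(u,w) + g(X,w)g(u,v). -/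
open scoped RealInnerProductSpace

section mach
variable {V : Type*} [NormedAddCommGroup V] [InnerProductSpace ℝ V]

lemma eps_mul_eps (v w : V) : eps v * eps w + eps w * eps v = 0 := by
  refine LinearMap.ext fun x => ?_
  simp only [Module.End.mul_apply, LinearMap.add_apply, LinearMap.zero_apply, eps,
    LinearMap.mulLeft_apply]
  rw [← mul_assoc, ← mul_assoc, ← add_mul, ExteriorAlgebra.ι_add_mul_swap, zero_mul]

lemma iot_mul_iot (v w : V) : iot v * iot w + iot w * iot v = 0 := by
  refine LinearMap.ext fun x => ?_
  simp only [Module.End.mul_apply, LinearMap.add_apply, LinearMap.zero_apply, iot]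
  rw [CliffordAlgebra.contractLeft_comm]
  exact neg_add_cancel _

lemma iot_mul_eps (v w : V) : iot v * eps w + eps w * iot v = ⟪v, w⟫ • 1 := by
  refine LinearMap.ext fun x => ?_
  simp only [Module.End.mul_apply, LinearMap.add_apply, LinearMap.smul_apply,
    Module.End.one_apply, eps, iot, LinearMap.mulLeft_apply]
  rw [show ExteriorAlgebra.ι ℝ w = CliffordAlgebra.ι (0 : QuadraticForm ℝ V) w from rfl,
    CliffordAlgebra.contractLeft_ι_mul, innerₛₗ_apply_apply]
  abel

noncomputable def gen (p : Bool × V) : Module.End ℝ (ExteriorAlgebra ℝ V) :=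
  cond p.1 (eps p.2) (iot p.2)

noncomputable def ac (p q : Bool × V) : ℝ := if p.1 = q.1 then 0 else ⟪p.2, q.2⟫

lemma gen_anticomm (p q : Bool × V) :
    gen p * gen q + gen q * gen p = ac p q • 1 := by
  obtain ⟨bp, pv⟩ := p; obtain ⟨bq, qv⟩ := q
  cases bp <;> cases bq
  · simpa [gen, ac] using iot_mul_iot pv qv
  · simpa [gen, ac] using iot_mul_eps pv qv
  · have := iot_mul_eps qv pv
    rw [add_comm, real_inner_comm] at this
    simpa [gen, ac] using this
  · simpa [gen, ac] using eps_mul_eps pv qv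

lemma gen_mul_gen (p q : Bool × V) :
    gen p * gen q = ac p q • (1 : Module.End ℝ (ExteriorAlgebra ℝ V)) - gen q * gen p :=
  eq_sub_of_add_eq (gen_anticomm p q)

noncomputable def prodL : List (Bool × V) → Module.End ℝ (ExteriorAlgebra ℝ V)
  | [] => 1
  | p :: L => gen p * prodL L

lemma prodL_nil : prodL ([] : List (Bool × V)) = 1 := rfl

lemma prodL_cons (p : Bool × V) (L : List (Bool × V)) :
    prodL (p :: L) = gen p * prodL L := rfl

lemma gen_prodL (p : Bool × V) (L : List (Bool × V)) :
    gen p * prodL L = prodL (p :: L) := rfl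

lemma prodL_mul : ∀ (L M : List (Bool × V)), prodL L * prodL M = prodL (L ++ M)
  | [], M => one_mul _
  | p :: L, M => by
      rw [List.cons_append, prodL_cons, prodL_cons, mul_assoc, prodL_mul L M]

lemma eps_eq (v : V) : eps v = prodL [(true, v)] := by
  simp [prodL_cons, prodL_nil, gen]

lemma iot_eq (v : V) : iot v = prodL [(false, v)] := by
  simp [prodL_cons, prodL_nil, gen]

noncomputable def contrSum (p : Bool × V) :
    List (Bool × V) → Module.End ℝ (ExteriorAlgebra ℝ V)
  | [] => 0
  | q :: L => ac p q • prodL L - gen q * contrSum p L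

lemma contrSum_nil (p : Bool × V) : contrSum p ([] : List (Bool × V)) = 0 := rfl

lemma contrSum_cons (p q : Bool × V) (L : List (Bool × V)) :
    contrSum p (q :: L) = ac p q • prodL L - gen q * contrSum p L := rfl

lemma move (p : Bool × V) :
    ∀ L : List (Bool × V), gen p * prodL L
      = contrSum p L + ((-1 : ℝ) ^ L.length) • (prodL L * gen p)
  | [] => by simp [prodL_nil, contrSum_nil]
  | q :: L => by
      rw [prodL_cons, ← mul_assoc, gen_mul_gen, sub_mul, smul_mul_assoc, one_mul, mul_assoc,
        move p L, mul_add, mul_smul_comm, contrSum_cons, List.length_cons, pow_succ,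
        mul_comm ((-1:ℝ) ^ L.length) (-1), neg_one_mul, neg_smul (M := Module.End ℝ (ExteriorAlgebra ℝ V)),
        mul_assoc (gen q) (prodL L) (gen p)]
      abel

lemma tr_reduce (p : Bool × V) (L : List (Bool × V)) (h : L.length % 2 = 1) :
    LinearMap.trace ℝ (ExteriorAlgebra ℝ V) (prodL (p :: L))
      = (2⁻¹ : ℝ) * LinearMap.trace ℝ (ExteriorAlgebra ℝ V) (contrSum p L) := by
  have hm := congrArg (LinearMap.trace ℝ (ExteriorAlgebra ℝ V)) (move p L)
  have h2 : LinearMap.trace ℝ (ExteriorAlgebra ℝ V) (prodL L * gen p)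
      = LinearMap.trace ℝ (ExteriorAlgebra ℝ V) (prodL (p :: L)) := by
    rw [LinearMap.trace_mul_comm]; rfl
  rw [map_add, map_smul, smul_eq_mul, Odd.neg_one_pow (Nat.odd_iff.mpr h), h2,
    gen_prodL] at hm
  linarith


lemma ac_tt (v w : V) : ac (true, v) (true, w) = 0 := rfl
lemma ac_ff (v w : V) : ac (false, v) (false, w) = 0 := rfl
lemma ac_tf (v w : V) : ac (true, v) (false, w) = ⟪v, w⟫ := rfl
lemma ac_ft (v w : V) : ac (false, v) (true, w) = ⟪v, w⟫ := rfl

lemma trace_prodL_nil :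
    LinearMap.trace ℝ (ExteriorAlgebra ℝ V) (prodL ([] : List (Bool × V)))
      = LinearMap.trace ℝ (ExteriorAlgebra ℝ V) 1 := rfl

lemma tr_reduce2 (p1 p2 : Bool × V) :
    LinearMap.trace ℝ (ExteriorAlgebra ℝ V) (prodL [p1, p2])
      = (2⁻¹ : ℝ) * LinearMap.trace ℝ (ExteriorAlgebra ℝ V) (contrSum p1 [p2]) :=
  tr_reduce _ _ (by simp)

lemma tr_reduce4 (p1 p2 p3 p4 : Bool × V) :
    LinearMap.trace ℝ (ExteriorAlgebra ℝ V) (prodL [p1, p2, p3, p4])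
      = (2⁻¹ : ℝ) * LinearMap.trace ℝ (ExteriorAlgebra ℝ V) (contrSum p1 [p2, p3, p4]) :=
  tr_reduce _ _ (by simp)

lemma tr_reduce6 (p1 p2 p3 p4 p5 p6 : Bool × V) :
    LinearMap.trace ℝ (ExteriorAlgebra ℝ V) (prodL [p1, p2, p3, p4, p5, p6])
      = (2⁻¹ : ℝ) * LinearMap.trace ℝ (ExteriorAlgebra ℝ V) (contrSum p1 [p2, p3, p4, p5, p6]) :=
  tr_reduce _ _ (by simp)

lemma tr_reduce8 (p1 p2 p3 p4 p5 p6 p7 p8 : Bool × V) :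
    LinearMap.trace ℝ (ExteriorAlgebra ℝ V) (prodL [p1, p2, p3, p4, p5, p6, p7, p8])
      = (2⁻¹ : ℝ) * LinearMap.trace ℝ (ExteriorAlgebra ℝ V)
          (contrSum p1 [p2, p3, p4, p5, p6, p7, p8]) :=
  tr_reduce _ _ (by simp)

end mach

set_option maxHeartbeats 16000000 in
set_option maxRecDepth 100000 in
theorem statement_14 {V : Type*} [NormedAddCommGroup V] [InnerProductSpace ℝ V]
    [FiniteDimensional ℝ V] (a₀ b₀ : ℝ) (u v w ξ X : V) :
    LinearMap.trace ℝ (ExteriorAlgebra ℝ V) (ctil a₀ b₀ u * ctil a₀ b₀ v * ctil a₀ b₀ w * ctil a₀ b₀ ξ * (cbar a₀ b₀ ξ * cmap X + cmap X * ctil a₀ b₀ ξ) * (eps ξ * iot ξ)) =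
      (a₀ ^ 4 * b₀ - 5 * a₀ ^ 2 * b₀ ^ 3) / 4 * ⟪ξ, ξ⟫ * ⟪ξ, X⟫ * (⟪ξ, u⟫ * ⟪v, w⟫ - ⟪ξ, v⟫ * ⟪u, w⟫ + ⟪ξ, w⟫ * ⟪u, v⟫) * LinearMap.trace ℝ (ExteriorAlgebra ℝ V) 1 -
        a₀ ^ 2 * b₀ * (a₀ + b₀) * (a₀ - b₀) / 4 * ⟪ξ, ξ⟫ ^ 2 * (⟪X, u⟫ * ⟪v, w⟫ - ⟪X, v⟫ * ⟪u, w⟫ + ⟪X, w⟫ * ⟪u, v⟫) * LinearMap.trace ℝ (ExteriorAlgebra ℝ V) 1 := by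
  simp only [ctil, cbar, cmap, eps_eq, iot_eq]
  simp only [sub_mul, mul_sub, add_mul, mul_add, smul_mul_assoc, mul_smul_comm, smul_smul,
    smul_sub, smul_add, prodL_mul, List.cons_append, List.nil_append]
  simp only [map_add, map_sub, map_smul, smul_eq_mul]
  simp only [tr_reduce8, tr_reduce6, tr_reduce4, tr_reduce2, contrSum_cons, contrSum_nil,
    ac_tt, ac_ff, ac_tf, ac_ft, gen_prodL, mul_sub, mul_smul_comm, mul_zero, smul_zero,
    sub_zero, zero_sub, zero_mul, mul_neg (α := Module.End ℝ (ExteriorAlgebra ℝ V)),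
    neg_mul (α := Module.End ℝ (ExteriorAlgebra ℝ V)), neg_neg, zero_smul, neg_smul (M := Module.End ℝ (ExteriorAlgebra ℝ V)),
    trace_prodL_nil, map_sub, map_add, map_smul, map_neg, map_zero, smul_eq_mul,
    sub_self, add_zero, zero_add]
  simp only [real_inner_comm u X, real_inner_comm v X, real_inner_comm w X,
    real_inner_comm u ξ, real_inner_comm v ξ, real_inner_comm w ξ, real_inner_comm X ξ]
  ring
end
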